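/- arXiv:2304.13544 — 3 statements merged into one kernel-verified Lean document; each statement's English description precedes it below -/
import Mathlib

section
/- Let (X,d) be a metric space and u, v : X → ℝ be locally Lipschitz functions such that u - v achieves a local maximum at a point x̂. If the lower slope of v at x̂ equals its slope (i.e., |∇v|(x̂) = |∇⁻v|(x̂)), then |∇u|(x̂) ≥ |∇v|(x̂). -/
open Filter Metric Topology

/-- The slope of `f` at `x`: `limsup_{y → x} |f y - f x| / dist y x`. -/
noncomputable def slopeAt {X : Type*} [MetricSpace X] (f : X → ℝ) (x : X) : ℝ :=
  Filter.limsup (fun y => |f y - f x| / dist y x) (𝓝[≠] x)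

/-- The lower slope of `f` at `x`: `limsup_{y → x} [f y - f x]₋ / dist y x`. -/
noncomputable def lowerSlopeAt {X : Type*} [MetricSpace X] (f : X → ℝ) (x : X) : ℝ :=
  Filter.limsup (fun y => max 0 (f x - f y) / dist y x) (𝓝[≠] x)

/-!
Near a local maximum `x` of `u - v`, every decrease of `v` is matched by a decrease of `u`:
`v x - v y ≤ u x - u y`. Hence the difference quotients of the lower slope of `v` are eventually
dominated by those of the slope of `u`; local Lipschitz continuity of `u` bounds the latter, which
is what the comparison of the two limsups needs.
-/

lemma max_zero_sub_le_abs_sub_of_sub_le {a b c d : ℝ} (h : c - d ≤ a - b) :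
    max 0 (b - d) ≤ |c - a| := by
  rw [abs_sub_comm]
  exact max_le (abs_nonneg _) (by linarith [le_abs_self (a - c)])

section

variable {X : Type*} [MetricSpace X]

lemma LocallyLipschitz.isBoundedUnder_le_slopeQuotient {u : X → ℝ} (hu : LocallyLipschitz u)
    (x : X) : IsBoundedUnder (· ≤ ·) (𝓝[≠] x) (fun y => |u y - u x| / dist y x) := by
  obtain ⟨K, t, ht, hK⟩ := hu x
  refine ⟨K, eventually_map.mpr ?_⟩
  filter_upwards [nhdsWithin_le_nhds ht, self_mem_nhdsWithin] with y hyt hyx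
  have hle : |u y - u x| ≤ K * dist y x := by
    simpa [Real.dist_eq] using hK.dist_le_mul y hyt x (mem_of_mem_nhds ht)
  calc |u y - u x| / dist y x ≤ K * dist y x / dist y x := by gcongr
    _ = K := mul_div_cancel_right₀ _ (dist_ne_zero.mpr hyx)

lemma lowerSlopeAt_le_slopeAt_of_isLocalMax {u v : X → ℝ} (hu : LocallyLipschitz u) {x : X}
    (hmax : IsLocalMax (fun y => u y - v y) x) : lowerSlopeAt v x ≤ slopeAt u x := by
  unfold lowerSlopeAt slopeAt
  rcases (𝓝[≠] x).eq_or_neBot with hbot | hne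
  · -- at an isolated point both limsups are the junk value `sInf univ = 0`
    simp [hbot, limsup, limsSup]
  have hquot : ∀ᶠ y in 𝓝[≠] x, max 0 (v x - v y) / dist y x ≤ |u y - u x| / dist y x := by
    filter_upwards [nhdsWithin_le_nhds hmax] with y hy
    gcongr
    exact max_zero_sub_le_abs_sub_of_sub_le hy
  exact limsup_le_limsup hquot
    (isCoboundedUnder_le_of_le _ fun _ => div_nonneg (le_max_left _ _) dist_nonneg)
    (hu.isBoundedUnder_le_slopeQuotient x)

end

theorem stmt_2_general {X : Type*} [MetricSpace X] (u v : X → ℝ)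
    (hu : LocallyLipschitz u)
    (xh : X) (hmax : IsLocalMax (fun x => u x - v x) xh)
    (h : slopeAt v xh = lowerSlopeAt v xh) :
    slopeAt v xh ≤ slopeAt u xh :=
  h ▸ lowerSlopeAt_le_slopeAt_of_isLocalMax hu hmax

theorem stmt_2 {X : Type*} [MetricSpace X] (u v : X → ℝ)
    (hu : LocallyLipschitz u) (hv : LocallyLipschitz v)
    (xh : X) (hmax : IsLocalMax (fun x => u x - v x) xh)
    (h : slopeAt v xh = lowerSlopeAt v xh) :
    slopeAt v xh ≤ slopeAt u xh :=
  stmt_2_general u v hu xh hmax h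
end

section
/- Let (X,d) be a metric space and u, v : X → ℝ be locally Lipschitz functions such that u - v achieves a local maximum at x̂. If the upper slope of u at x̂ equals its slope (i.e., |∇u|(x̂) = |∇⁺u|(x̂)), then |∇u|(x̂) ≤ |∇v|(x̂). -/
open Filter Metric Topology

/-- The upper slope of `f` at `x`: `limsup_{y → x} [f y - f x]₊ / dist y x`. -/
noncomputable def upperSlopeAt {X : Type*} [MetricSpace X] (f : X → ℝ) (x : X) : ℝ :=
  Filter.limsup (fun y => max 0 (f y - f x) / dist y x) (𝓝[≠] x)

/-! Near a local maximum `x` of `u - v` we have `[u y - u x]₊ ≤ |v y - v x|`, so the upper slope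
of `u` at `x` is at most the slope of `v`; the local Lipschitz bound on `v` makes the limsup of the
right-hand side finite, which is what the comparison of limsups needs. -/

section

variable {X : Type*} [MetricSpace X]

theorem LipschitzOnWith.abs_sub_div_dist_le {f : X → ℝ} {K : NNReal} {t : Set X}
    (hf : LipschitzOnWith K f t) {x y : X} (hx : x ∈ t) (hy : y ∈ t) :
    |f y - f x| / dist y x ≤ K := by
  refine div_le_of_le_mul₀ dist_nonneg K.coe_nonneg ?_
  simpa only [Real.dist_eq] using hf.dist_le_mul y hy x hx

theorem LocallyLipschitz.isBoundedUnder_abs_sub_div_dist {f : X → ℝ} (hf : LocallyLipschitz f)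
    (x : X) : IsBoundedUnder (· ≤ ·) (𝓝 x) (fun y => |f y - f x| / dist y x) := by
  obtain ⟨K, t, ht, hK⟩ := hf x
  exact ⟨K, eventually_map.mpr <| eventually_of_mem ht fun y hy =>
    hK.abs_sub_div_dist_le (mem_of_mem_nhds ht) hy⟩

theorem eventually_max_zero_sub_le_abs_sub_of_isLocalMax {u v : X → ℝ} {x : X}
    (hmax : IsLocalMax (fun y => u y - v y) x) :
    ∀ᶠ y in 𝓝 x, max 0 (u y - u x) ≤ |v y - v x| := by
  filter_upwards [hmax] with y hy
  refine max_le (abs_nonneg _) (le_trans ?_ (le_abs_self _))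
  linarith [show u y - v y ≤ u x - v x from hy]

theorem upperSlopeAt_le_slopeAt_of_isLocalMax_sub {u v : X → ℝ} {x : X}
    (hv : LocallyLipschitz v) (hmax : IsLocalMax (fun y => u y - v y) x) :
    upperSlopeAt u x ≤ slopeAt v x := by
  rcases eq_or_neBot (𝓝[≠] x) with hbot | hne
  · -- at an isolated point both limsups are taken along `⊥`, so they coincide
    simp only [upperSlopeAt, slopeAt, hbot, Filter.limsup, Filter.map_bot, le_refl]
  · have hcobdd : IsCoboundedUnder (· ≤ ·) (𝓝[≠] x)
        (fun y => max 0 (u y - u x) / dist y x) :=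
      isBoundedUnder_of_eventually_ge (a := 0) (Eventually.of_forall fun y =>
        div_nonneg (le_max_left _ _) dist_nonneg) |>.isCoboundedUnder_le
    refine limsup_le_limsup ?_ hcobdd
      ((hv.isBoundedUnder_abs_sub_div_dist x).mono nhdsWithin_le_nhds)
    filter_upwards [nhdsWithin_le_nhds (eventually_max_zero_sub_le_abs_sub_of_isLocalMax hmax)]
      with y hy
    gcongr

end

theorem stmt_3_general {X : Type*} [MetricSpace X] (u v : X → ℝ)
    (hv : LocallyLipschitz v)
    (xh : X) (hmax : IsLocalMax (fun x => u x - v x) xh)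
    (h : slopeAt u xh = upperSlopeAt u xh) :
    slopeAt u xh ≤ slopeAt v xh :=
  h ▸ upperSlopeAt_le_slopeAt_of_isLocalMax_sub hv hmax

theorem stmt_3 {X : Type*} [MetricSpace X] (u v : X → ℝ)
    (hu : LocallyLipschitz u) (hv : LocallyLipschitz v)
    (xh : X) (hmax : IsLocalMax (fun x => u x - v x) xh)
    (h : slopeAt u xh = upperSlopeAt u xh) :
    slopeAt u xh ≤ slopeAt v xh :=
  stmt_3_general u v hv xh hmax h
end

section
/- Let (X,d) be a metric space and u, v, w : X → ℝ be locally Lipschitz functions such that u - v + w achieves a local maximum at x̂ ∈ X. If |∇u|(x̂) = |∇⁺u|(x̂) and |∇v|(x̂) = |∇⁻v|(x̂), then ||∇u|(x̂) − |∇v|(x̂)| ≤ |∇w|(x̂). -/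
/-!
Near a local maximum `x̂` of `u - v + w` the increments satisfy
`u y - u x̂ ≤ (v - w) y - (v - w) x̂` and `v x̂ - v y ≤ (u + w) x̂ - (u + w) y`.
Dividing by `d(y, x̂)` and passing to the limsup gives `|∇⁺u| ≤ |∇(v - w)| ≤ |∇v| + |∇w|` and
`|∇⁻v| ≤ |∇(u + w)| ≤ |∇u| + |∇w|` at `x̂`; the hypotheses turn these into the two halves of
the claimed bound. Local Lipschitz continuity keeps the difference quotients bounded, so that
the limsups (which are real-valued, `0` when unbounded) behave monotonically and subadditively.
-/

open Filter Metric Topology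

theorem Real.limsup_bot {α : Type*} (f : α → ℝ) : limsup f ⊥ = 0 := by
  simp only [limsup_eq, eventually_bot, Set.ofPred_true, Real.sInf_univ]

section NonnegLimsup

variable {α : Type*} {l : Filter α} {f g : α → ℝ}

theorem limsup_le_limsup_of_nonneg (hf : ∀ᶠ a in l, 0 ≤ f a) (hfg : f ≤ᶠ[l] g)
    (hg : IsBoundedUnder (· ≤ ·) l g) : limsup f l ≤ limsup g l := by
  rcases l.eq_or_neBot with rfl | _
  · simp only [Real.limsup_bot, le_refl]
  · exact limsup_le_limsup hfg (isBoundedUnder_of_eventually_ge hf).isCoboundedUnder_le hg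

theorem limsup_add_le_of_nonneg (hf₀ : ∀ᶠ a in l, 0 ≤ f a) (hg₀ : ∀ᶠ a in l, 0 ≤ g a)
    (hf : IsBoundedUnder (· ≤ ·) l f) (hg : IsBoundedUnder (· ≤ ·) l g) :
    limsup (f + g) l ≤ limsup f l + limsup g l := by
  rcases l.eq_or_neBot with rfl | _
  · simp only [Real.limsup_bot, add_zero, le_refl]
  · exact limsup_add_le (isBoundedUnder_of_eventually_ge hf₀) hf
      (isBoundedUnder_of_eventually_ge hg₀).isCoboundedUnder_le hg

end NonnegLimsup

section Slopes

variable {X : Type*} [MetricSpace X] {f g : X → ℝ} {x : X}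

theorem slopeQuotient_nonneg (f : X → ℝ) (x : X) :
    ∀ᶠ y in 𝓝[≠] x, 0 ≤ |f y - f x| / dist y x :=
  Eventually.of_forall fun _ => div_nonneg (abs_nonneg _) dist_nonneg

theorem LocallyLipschitz.isBoundedUnder_slopeQuotient (hf : LocallyLipschitz f) (x : X) :
    IsBoundedUnder (· ≤ ·) (𝓝[≠] x) (fun y => |f y - f x| / dist y x) := by
  obtain ⟨K, t, ht, hK⟩ := hf x
  refine isBoundedUnder_of_eventually_le (a := (K : ℝ)) ?_
  filter_upwards [nhdsWithin_le_nhds ht, self_mem_nhdsWithin] with y hyt hyx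
  rw [div_le_iff₀ (dist_pos.2 hyx), ← Real.dist_eq]
  exact hK.dist_le_mul y hyt x (mem_of_mem_nhds ht)

theorem slopeAt_neg (f : X → ℝ) (x : X) : slopeAt (-f) x = slopeAt f x := by
  simp only [slopeAt, Pi.neg_apply, ← neg_sub', abs_neg]

theorem slopeAt_add_le (hf : LocallyLipschitz f) (hg : LocallyLipschitz g) :
    slopeAt (f + g) x ≤ slopeAt f x + slopeAt g x := by
  refine (limsup_le_limsup_of_nonneg (slopeQuotient_nonneg _ x) (Eventually.of_forall fun y => ?_)
    (isBoundedUnder_le_add (hf.isBoundedUnder_slopeQuotient x)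
      (hg.isBoundedUnder_slopeQuotient x))).trans
    (limsup_add_le_of_nonneg (slopeQuotient_nonneg f x) (slopeQuotient_nonneg g x)
      (hf.isBoundedUnder_slopeQuotient x) (hg.isBoundedUnder_slopeQuotient x))
  simp only [Pi.add_apply, ← add_div, add_sub_add_comm]
  exact div_le_div_of_nonneg_right (abs_add_le _ _) dist_nonneg

theorem slopeAt_sub_le (hf : LocallyLipschitz f) (hg : LocallyLipschitz g) :
    slopeAt (f - g) x ≤ slopeAt f x + slopeAt g x := by
  rw [sub_eq_add_neg, ← slopeAt_neg g]
  exact slopeAt_add_le hf hg.neg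

theorem upperSlopeAt_le_slopeAt (hg : LocallyLipschitz g)
    (hfg : ∀ᶠ y in 𝓝 x, f y - f x ≤ g y - g x) : upperSlopeAt f x ≤ slopeAt g x := by
  refine limsup_le_limsup_of_nonneg
    (Eventually.of_forall fun _ => div_nonneg (le_max_left _ _) dist_nonneg) ?_
    (hg.isBoundedUnder_slopeQuotient x)
  filter_upwards [nhdsWithin_le_nhds hfg] with y hy
  exact div_le_div_of_nonneg_right (max_le (abs_nonneg _) (hy.trans (le_abs_self _))) dist_nonneg

theorem lowerSlopeAt_le_slopeAt (hg : LocallyLipschitz g)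
    (hfg : ∀ᶠ y in 𝓝 x, f x - f y ≤ g x - g y) : lowerSlopeAt f x ≤ slopeAt g x := by
  refine limsup_le_limsup_of_nonneg
    (Eventually.of_forall fun _ => div_nonneg (le_max_left _ _) dist_nonneg) ?_
    (hg.isBoundedUnder_slopeQuotient x)
  filter_upwards [nhdsWithin_le_nhds hfg] with y hy
  exact div_le_div_of_nonneg_right
    (max_le (abs_nonneg _) (hy.trans ((le_abs_self _).trans_eq (abs_sub_comm _ _)))) dist_nonneg

end Slopes

theorem stmt_4 {X : Type*} [MetricSpace X] (u v w : X → ℝ)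
    (hu : LocallyLipschitz u) (hv : LocallyLipschitz v) (hw : LocallyLipschitz w)
    (xh : X) (hmax : IsLocalMax (fun x => u x - v x + w x) xh)
    (hu' : slopeAt u xh = upperSlopeAt u xh) (hv' : slopeAt v xh = lowerSlopeAt v xh) :
    |slopeAt u xh - slopeAt v xh| ≤ slopeAt w xh := by
  have hu_le : slopeAt u xh ≤ slopeAt v xh + slopeAt w xh :=
    calc slopeAt u xh = upperSlopeAt u xh := hu'
      _ ≤ slopeAt (v - w) xh := upperSlopeAt_le_slopeAt (hv.sub hw) <| hmax.mono fun y hy => by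
          simp only [Pi.sub_apply] at hy ⊢; linarith
      _ ≤ slopeAt v xh + slopeAt w xh := slopeAt_sub_le hv hw
  have hv_le : slopeAt v xh ≤ slopeAt u xh + slopeAt w xh :=
    calc slopeAt v xh = lowerSlopeAt v xh := hv'
      _ ≤ slopeAt (u + w) xh := lowerSlopeAt_le_slopeAt (hu.add hw) <| hmax.mono fun y hy => by
          simp only [Pi.add_apply] at hy ⊢; linarith
      _ ≤ slopeAt u xh + slopeAt w xh := slopeAt_add_le hu hw
  exact abs_sub_le_iff.2 ⟨by linarith, by linarith⟩
end
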